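/- Let K ⊆ ℝ³ be a regular convex cone such that diag(λ,1,1)[K] = K for all λ > 0, i.e., K is invariant under multiplication of the first coordinate by an arbitrary positive number. Then K is simplicial: K is isomorphic to the positive orthant ℝ₊³, i.e., K is the conic convex hull of three linearly independent vectors. -/

import Mathlib

open Set

/-- A regular convex cone: closed, convex, invariant under positive scalings,
with nonempty interior, containing no line (pointed). -/
def IsRegularCone {n : ℕ} (K : Set (Fin n → ℝ)) : Prop :=
  IsClosed K ∧ Convex ℝ K ∧ (∀ c : ℝ, 0 < c → ∀ x ∈ K, c • x ∈ K) ∧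
    (interior K).Nonempty ∧ ∀ x ∈ K, -x ∈ K → x = 0

/-- Two cones in ℝ³ are isomorphic if a linear automorphism maps one onto the other. -/
def ConeIso (K K' : Set (Fin 3 → ℝ)) : Prop :=
  ∃ S : Matrix (Fin 3) (Fin 3) ℝ, IsUnit S.det ∧ (fun v => S.mulVec v) '' K = K'

/-!
Letting `λ → 0` in `diag(λ, 1, 1) x ∈ K` and in `λ • diag(λ⁻¹, 1, 1) x ∈ K` shows that with
every `x` the cone `K` contains `(0, x₁, x₂)` and `(x₀, 0, 0)`, so `K` is the sum of its slice on
the first axis and its slice on the plane `x₀ = 0`. A salient closed cone on a line is a ray. A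
salient closed cone `C` in a plane is spanned by two of its elements: a functional `f ≥ 0` on `C`
with `f p > 0` for some `p ∈ C` cuts `C` in a closed segment of the line `{f = 1}`, and the
endpoints of that segment (or its directions of recession, where it is unbounded) generate `C`.
Since `K` has interior points, the three generators span `ℝ³` and are linearly independent.
-/

open Filter Topology

theorem IsClosed.mem_of_continuous_of_forall_pos {X : Type*} [TopologicalSpace X] {s : Set X}
    (hs : IsClosed s) {γ : ℝ → X} (hγ : Continuous γ) (h : ∀ c : ℝ, 0 < c → γ c ∈ s) :
    γ 0 ∈ s := by
  have : closure (Ioi (0 : ℝ)) ⊆ γ ⁻¹' s := closure_minimal h (hs.preimage hγ)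
  exact this (by simp [closure_Ioi])

namespace IsRegularCone

variable {n : ℕ} {K : Set (Fin n → ℝ)}

theorem zero_mem (hK : IsRegularCone K) : (0 : Fin n → ℝ) ∈ K := by
  obtain ⟨hcl, -, hsmul, ⟨x, hx⟩, -⟩ := hK
  simpa using hcl.mem_of_continuous_of_forall_pos (γ := fun c : ℝ => c • x) (by fun_prop)
    fun c hc => hsmul c hc x (interior_subset hx)

theorem add_mem (hK : IsRegularCone K) {x y : Fin n → ℝ} (hx : x ∈ K) (hy : y ∈ K) :
    x + y ∈ K := by
  have hmid := hK.2.1 hx hy (by norm_num : (0 : ℝ) ≤ 1 / 2) (by norm_num : (0 : ℝ) ≤ 1 / 2)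
    (by norm_num)
  convert hK.2.2.1 2 two_pos _ hmid using 1
  module

def toProperCone (hK : IsRegularCone K) : ProperCone ℝ (Fin n → ℝ) where
  carrier := K
  add_mem' := hK.add_mem
  zero_mem' := hK.zero_mem
  smul_mem' c x hx := by
    obtain ⟨c, hc⟩ := c
    rcases hc.eq_or_lt with rfl | hc
    · simpa using hK.zero_mem
    · exact hK.2.2.1 c hc x hx
  isClosed' := hK.1

@[simp]
theorem mem_toProperCone (hK : IsRegularCone K) {x : Fin n → ℝ} : x ∈ hK.toProperCone ↔ x ∈ K :=
  Iff.rfl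

end IsRegularCone

namespace ProperCone

variable {E : Type*} [AddCommGroup E] [Module ℝ E] [TopologicalSpace E] {C : ProperCone ℝ E}

theorem eq_zero_of_smul_mem_of_neg_of_pos (hsal : ∀ x ∈ C, -x ∈ C → x = 0) {e : E} {s t : ℝ}
    (hs : s • e ∈ C) (ht : t • e ∈ C) (hs0 : s < 0) (ht0 : 0 < t) : e = 0 := by
  refine hsal e ?_ ?_
  · simpa [smul_smul, ht0.ne'] using C.smul_mem ht (inv_nonneg.2 ht0.le)
  · simpa [smul_smul, hs0.ne] using C.smul_mem hs (inv_nonneg.2 (neg_nonneg.2 hs0.le))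

theorem exists_generator_on_line (hsal : ∀ x ∈ C, -x ∈ C → x = 0) (e : E) :
    ∃ u ∈ C, ∀ t : ℝ, t • e ∈ C → ∃ a : ℝ, 0 ≤ a ∧ t • e = a • u := by
  by_cases h : ∃ t₀ : ℝ, t₀ ≠ 0 ∧ t₀ • e ∈ C
  · obtain ⟨t₀, ht₀, ht₀C⟩ := h
    refine ⟨t₀ • e, ht₀C, fun t htC => ?_⟩
    by_cases he : e = 0
    · exact ⟨0, le_rfl, by simp [he]⟩
    refine ⟨t / t₀, ?_, by rw [smul_smul, div_mul_cancel₀ _ ht₀]⟩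
    by_contra! hneg
    rcases div_neg_iff.1 hneg with ⟨ht, ht₀'⟩ | ⟨ht, ht₀'⟩
    · exact he (eq_zero_of_smul_mem_of_neg_of_pos hsal ht₀C htC ht₀' ht)
    · exact he (eq_zero_of_smul_mem_of_neg_of_pos hsal htC ht₀C ht ht₀')
  · simp only [not_exists, not_and] at h
    refine ⟨0, C.zero_mem, fun t htC => ⟨0, le_rfl, ?_⟩⟩
    by_cases ht : t = 0
    · simp [ht]
    · exact absurd htC (h t ht)

def lineParams (C : ProperCone ℝ E) (x₀ d : E) : Set ℝ := {t | x₀ + t • d ∈ C}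

open scoped Classical in
/-- The end in direction `d` of the segment `C ∩ (x₀ + ℝ • d)`, or `d` itself when the segment
is unbounded in that direction. -/
noncomputable def edge (C : ProperCone ℝ E) (x₀ d : E) : E :=
  if BddAbove (C.lineParams x₀ d) then x₀ + sSup (C.lineParams x₀ d) • d else d

theorem edge_of_bddAbove {x₀ d : E} (h : BddAbove (C.lineParams x₀ d)) :
    C.edge x₀ d = x₀ + sSup (C.lineParams x₀ d) • d :=
  if_pos h

theorem edge_eq_of_mem {x₀ d : E} (hx₀ : x₀ ∈ C) (hd : d ∈ C) : C.edge x₀ d = d := by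
  refine if_neg fun ⟨M, hM⟩ => ?_
  have : max M 0 + 1 ∈ C.lineParams x₀ d := C.add_mem hx₀ (C.smul_mem hd (by positivity))
  linarith [hM this, le_max_left M 0]

theorem exists_eq_smul_edge_add {x₀ d : E} {s t : ℝ} (ht : t ∈ C.lineParams x₀ d) (hst : s ≤ t) :
    ∃ a b : ℝ, 0 ≤ a ∧ 0 ≤ b ∧ x₀ + t • d = a • C.edge x₀ d + b • (x₀ + s • d) := by
  unfold edge
  split_ifs with h
  · set M := sSup (C.lineParams x₀ d)
    have htM : t ≤ M := le_csSup h ht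
    rcases (hst.trans htM).eq_or_lt with hsM | hsM
    · obtain rfl : t = s := le_antisymm (hsM ▸ htM) hst
      exact ⟨0, 1, le_rfl, zero_le_one, by module⟩
    · refine ⟨(t - s) / (M - s), (M - t) / (M - s), div_nonneg (by linarith) (by linarith),
        div_nonneg (by linarith) (by linarith), ?_⟩
      have : M - s ≠ 0 := by linarith
      match_scalars <;> field_simp <;> ring
  · exact ⟨t - s, 1, by linarith, zero_le_one, by module⟩

theorem exists_eq_smul_edge_add_smul_edge {x₀ d : E} {t : ℝ} (ht : t ∈ C.lineParams x₀ d)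
    (h : BddAbove (C.lineParams x₀ (-d))) :
    ∃ a b : ℝ, 0 ≤ a ∧ 0 ≤ b ∧ x₀ + t • d = a • C.edge x₀ d + b • C.edge x₀ (-d) := by
  have ht' : -t ∈ C.lineParams x₀ (-d) := by simpa [lineParams] using ht
  obtain ⟨a, b, ha, hb, hab⟩ :=
    exists_eq_smul_edge_add (s := -sSup (C.lineParams x₀ (-d))) ht (by linarith [le_csSup h ht'])
  exact ⟨a, b, ha, hb, by rw [hab, edge_of_bddAbove h, neg_smul, smul_neg]⟩

variable [IsTopologicalAddGroup E] [ContinuousSMul ℝ E]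

theorem mem_of_not_bddAbove_lineParams {x₀ d : E} (h : ¬BddAbove (C.lineParams x₀ d)) : d ∈ C := by
  rw [not_bddAbove_iff] at h
  choose t ht hlt using h
  have htop : Tendsto t atTop atTop := tendsto_atTop_mono (fun x => (hlt x).le) tendsto_id
  have hmem : ∀ᶠ x in atTop, (t x)⁻¹ • x₀ + d ∈ C := by
    filter_upwards [eventually_gt_atTop 0] with x hx
    have htx : 0 < t x := hx.trans (hlt x)
    convert C.smul_mem (ht x) (inv_nonneg.2 htx.le) using 1
    rw [smul_add, smul_smul, inv_mul_cancel₀ htx.ne', one_smul]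
  have hlim : Tendsto (fun x => (t x)⁻¹ • x₀ + d) atTop (𝓝 d) := by
    simpa using (htop.inv_tendsto_atTop.smul_const x₀).add_const d
  exact C.isClosed.mem_of_tendsto hlim hmem

theorem edge_mem {x₀ d : E} (hx₀ : x₀ ∈ C) : C.edge x₀ d ∈ C := by
  unfold edge
  split_ifs with h
  · have hI : IsClosed (C.lineParams x₀ d) := C.isClosed.preimage (by fun_prop)
    exact hI.csSup_mem ⟨0, by simpa [lineParams]⟩ h
  · exact mem_of_not_bddAbove_lineParams h

theorem exists_generators_of_subset_span_pair (hsal : ∀ x ∈ C, -x ∈ C → x = 0)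
    (f : E →ₗ[ℝ] ℝ) (hf : ∀ x ∈ C, 0 ≤ f x) {x₀ d : E} (hx₀ : x₀ ∈ C) (hfx₀ : f x₀ = 1)
    (hd : d ≠ 0) (hfd : f d = 0) (hspan : (C : Set E) ⊆ Submodule.span ℝ {x₀, d}) :
    ∃ u ∈ C, ∃ w ∈ C, ∀ x ∈ C, ∃ a b : ℝ, 0 ≤ a ∧ 0 ≤ b ∧ x = a • u + b • w := by
  refine ⟨C.edge x₀ d, edge_mem hx₀, C.edge x₀ (-d), edge_mem hx₀, fun x hx => ?_⟩
  obtain ⟨c, s, rfl⟩ := Submodule.mem_span_pair.1 (hspan hx)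
  have hc : f (c • x₀ + s • d) = c := by simp [hfx₀, hfd]
  have hc0 : 0 ≤ c := hc ▸ hf _ hx
  rcases hc0.eq_or_lt with rfl | hc0
  · rcases lt_trichotomy s 0 with hs | rfl | hs
    · have hnd : -d ∈ C := by simpa [hs.ne] using C.smul_mem hx (inv_nonneg.2 (neg_nonneg.2 hs.le))
      exact ⟨0, -s, le_rfl, by linarith, by rw [edge_eq_of_mem hx₀ hnd]; module⟩
    · exact ⟨0, 0, le_rfl, le_rfl, by simp⟩
    · have hdC : d ∈ C := by simpa [hs.ne'] using C.smul_mem hx (inv_nonneg.2 hs.le)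
      exact ⟨s, 0, hs.le, le_rfl, by rw [edge_eq_of_mem hx₀ hdC]; module⟩
  have hx' : c • x₀ + s • d = c • (x₀ + (s / c) • d) := by
    rw [smul_add, smul_smul, mul_div_cancel₀ _ hc0.ne']
  have ht : s / c ∈ C.lineParams x₀ d := by
    simpa [lineParams, hx', hc0.ne'] using C.smul_mem hx (inv_nonneg.2 hc0.le)
  obtain ⟨a, b, ha, hb, hab⟩ : ∃ a b : ℝ, 0 ≤ a ∧ 0 ≤ b ∧
      x₀ + (s / c) • d = a • C.edge x₀ d + b • C.edge x₀ (-d) := by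
    by_cases hB : BddAbove (C.lineParams x₀ (-d))
    · exact exists_eq_smul_edge_add_smul_edge ht hB
    -- `d` and `-d` cannot both be recession directions of the salient cone `C`.
    have hA : BddAbove (C.lineParams x₀ d) := by
      by_contra hA
      exact hd (hsal d (mem_of_not_bddAbove_lineParams hA) (mem_of_not_bddAbove_lineParams hB))
    have ht' : -(s / c) ∈ C.lineParams x₀ (-d) := by simpa [lineParams] using ht
    obtain ⟨a, b, ha, hb, hab⟩ := exists_eq_smul_edge_add_smul_edge ht' (by rwa [neg_neg])
    exact ⟨b, a, hb, ha, by rw [← neg_smul_neg, hab, neg_neg, add_comm]⟩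
  exact ⟨c * a, c * b, by positivity, by positivity, by rw [hx', hab]; module⟩

theorem exists_generators_of_finrank_eq_two [LocallyConvexSpace ℝ E]
    (hE : Module.finrank ℝ E = 2) (hsal : ∀ x ∈ C, -x ∈ C → x = 0) :
    ∃ u ∈ C, ∃ w ∈ C, ∀ x ∈ C, ∃ a b : ℝ, 0 ≤ a ∧ 0 ≤ b ∧ x = a • u + b • w := by
  by_cases hC : ∀ x ∈ C, x = 0
  · exact ⟨0, C.zero_mem, 0, C.zero_mem, fun x hx => ⟨0, 0, le_rfl, le_rfl, by simp [hC x hx]⟩⟩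
  obtain ⟨p, hp, hp0⟩ : ∃ p ∈ C, p ≠ 0 := by simpa using hC
  obtain ⟨f, hf, hfp⟩ := C.hyperplane_separation_point (x₀ := -p) fun h => hp0 (hsal p hp h)
  have hfp : 0 < f p := by simpa using hfp
  have : FiniteDimensional ℝ E := Module.finite_of_finrank_eq_succ hE
  obtain ⟨d, hd, hd0⟩ := (Submodule.ne_bot_iff _).1
    (LinearMap.ker_ne_bot_of_finrank_lt (f := (f : E →ₗ[ℝ] ℝ)) (by simp [hE]))
  have hfd : f d = 0 := hd
  set x₀ := (f p)⁻¹ • p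
  have hfx₀ : f x₀ = 1 := by simp [x₀, hfp.ne']
  have hind : LinearIndependent ℝ ![x₀, d] := LinearIndependent.pair_iff.2 fun s t hst => by
    obtain rfl : s = 0 := by simpa [hfx₀, hfd] using congrArg f hst
    simpa [hd0] using hst
  have hspan : Submodule.span ℝ {x₀, d} = ⊤ := by
    simpa [Matrix.range_cons_cons_empty, Set.pair_comm] using
      hind.span_eq_top_of_card_eq_finrank' (by simp [hE])
  exact exists_generators_of_subset_span_pair hsal f hf (C.smul_mem hp (inv_nonneg.2 hfp.le))
    hfx₀ hd0 hfd (by rw [hspan, Submodule.top_coe]; exact subset_univ _)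

end ProperCone

def planeEmbedding : (Fin 2 → ℝ) →L[ℝ] (Fin 3 → ℝ) :=
  ContinuousLinearMap.pi ![0, ContinuousLinearMap.proj 0, ContinuousLinearMap.proj 1]

@[simp]
theorem planeEmbedding_apply (v : Fin 2 → ℝ) : planeEmbedding v = ![0, v 0, v 1] := by
  ext i; fin_cases i <;> rfl

theorem planeEmbedding_injective : Function.Injective planeEmbedding := by
  intro v w h
  have h1 := congrFun h 1
  have h2 := congrFun h 2
  ext i; fin_cases i <;> simp_all

def IsInvariantUnderFirstScaling (K : Set (Fin 3 → ℝ)) : Prop :=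
  ∀ lam : ℝ, 0 < lam → (fun v : Fin 3 → ℝ => ![lam * v 0, v 1, v 2]) '' K = K

namespace IsInvariantUnderFirstScaling

variable {K : Set (Fin 3 → ℝ)}

theorem scale_mem (hinv : IsInvariantUnderFirstScaling K) {c : ℝ} (hc : 0 < c) {x : Fin 3 → ℝ}
    (hx : x ∈ K) : ![c * x 0, x 1, x 2] ∈ K :=
  hinv c hc ▸ mem_image_of_mem _ hx

theorem zero_first_mem (hinv : IsInvariantUnderFirstScaling K) (hcl : IsClosed K) {x : Fin 3 → ℝ}
    (hx : x ∈ K) : ![0, x 1, x 2] ∈ K := by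
  simpa using hcl.mem_of_continuous_of_forall_pos (γ := fun c : ℝ => ![c * x 0, x 1, x 2])
    (by fun_prop) fun c hc => hinv.scale_mem hc hx

theorem first_only_mem (hinv : IsInvariantUnderFirstScaling K) (hK : IsRegularCone K)
    {x : Fin 3 → ℝ} (hx : x ∈ K) : ![x 0, 0, 0] ∈ K := by
  have hpos : ∀ c : ℝ, 0 < c → ![x 0, c * x 1, c * x 2] ∈ K := fun c hc => by
    convert hK.2.2.1 c hc _ (hinv.scale_mem (inv_pos.2 hc) hx) using 1
    ext i; fin_cases i <;> simp [hc.ne']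
  simpa using hK.1.mem_of_continuous_of_forall_pos (by fun_prop) hpos

theorem exists_three_generators (hinv : IsInvariantUnderFirstScaling K) (hK : IsRegularCone K) :
    ∃ u₁ u₂ u₃ : Fin 3 → ℝ,
      K = {x | ∃ a b c : ℝ, 0 ≤ a ∧ 0 ≤ b ∧ 0 ≤ c ∧ x = a • u₁ + b • u₂ + c • u₃} := by
  set C := hK.toProperCone with hC
  have hsal : ∀ x ∈ C, -x ∈ C → x = 0 := hK.2.2.2.2
  obtain ⟨u₁, hu₁, hu₁gen⟩ := C.exists_generator_on_line hsal ![1, 0, 0]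
  obtain ⟨u, hu, w, hw, hgen⟩ := (C.comap planeEmbedding).exists_generators_of_finrank_eq_two
    (by simp) fun v hv hnv => planeEmbedding_injective <| by
      simpa using hsal _ hv (by simpa using hnv)
  refine ⟨u₁, planeEmbedding u, planeEmbedding w, Set.ext fun x => ⟨fun hx => ?_, ?_⟩⟩
  · obtain ⟨a, ha, hax⟩ := hu₁gen (x 0) (by simpa [hC] using hinv.first_only_mem hK hx)
    obtain ⟨b, c, hb, hc, hbc⟩ :=
      hgen ![x 1, x 2] (by simpa [hC] using hinv.zero_first_mem hK.1 hx)
    refine ⟨a, b, c, ha, hb, hc, ?_⟩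
    calc x = x 0 • ![1, 0, 0] + planeEmbedding ![x 1, x 2] := by
          ext i; fin_cases i <;> simp
      _ = _ := by rw [hax, hbc, map_add, map_smul, map_smul, add_assoc]
  · rintro ⟨a, b, c, ha, hb, hc, rfl⟩
    exact C.add_mem (C.add_mem (C.smul_mem hu₁ ha) (C.smul_mem hu hb)) (C.smul_mem hw hc)

end IsInvariantUnderFirstScaling

theorem linearIndependent_of_nonempty_interior_subset_span {ι E : Type*} [Fintype ι]
    [NormedAddCommGroup E] [NormedSpace ℝ E] {b : ι → E} {K : Set E}
    (hK : (interior K).Nonempty) (hsub : K ⊆ Submodule.span ℝ (range b))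
    (hcard : Fintype.card ι = Module.finrank ℝ E) : LinearIndependent ℝ b :=
  linearIndependent_of_top_le_span_of_card_eq_finrank
    (Submodule.eq_top_of_nonempty_interior' _ (hK.mono (interior_mono hsub))).ge hcard

theorem coneIso_nonneg_of_linearIndependent {u₁ u₂ u₃ : Fin 3 → ℝ}
    (h : LinearIndependent ℝ ![u₁, u₂, u₃]) :
    ConeIso {x | ∃ a b c : ℝ, 0 ≤ a ∧ 0 ≤ b ∧ 0 ≤ c ∧ x = a • u₁ + b • u₂ + c • u₃}
      {v | ∀ i, 0 ≤ v i} := by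
  set M := (Matrix.of ![u₁, u₂, u₃]).transpose
  have hM : IsUnit M.det := by
    rw [Matrix.det_transpose, ← Matrix.isUnit_iff_isUnit_det,
      ← Matrix.linearIndependent_rows_iff_isUnit]
    exact h
  have hMv : ∀ v, M.mulVec v = v 0 • u₁ + v 1 • u₂ + v 2 • u₃ := fun v => by
    ext i; simp [M, Matrix.mulVec, dotProduct, Fin.sum_univ_three]; ring
  have hinv : ∀ v, M⁻¹.mulVec (M.mulVec v) = v := fun v => by
    rw [Matrix.mulVec_mulVec, Matrix.nonsing_inv_mul _ hM, Matrix.one_mulVec]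
  refine ⟨M⁻¹, Matrix.isUnit_nonsing_inv_det _ hM, Set.ext fun v => ⟨?_, fun hv => ?_⟩⟩
  · rintro ⟨_, ⟨a, b, c, ha, hb, hc, rfl⟩, rfl⟩
    have habc : a • u₁ + b • u₂ + c • u₃ = M.mulVec ![a, b, c] := by simp [hMv]
    simp only [habc, hinv]
    intro i; fin_cases i <;> simpa
  · exact ⟨M.mulVec v, ⟨v 0, v 1, v 2, hv 0, hv 1, hv 2, hMv v⟩, hinv v⟩

/-- a regular convex cone in ℝ³ invariant under arbitrary positive
scalings of the first coordinate is simplicial: it is isomorphic to the positive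
orthant, i.e., it is the conic convex hull of three linearly independent vectors. -/
theorem cone_invariant_first_coordinate_scaling_is_simplicial
    (K : Set (Fin 3 → ℝ)) (hK : IsRegularCone K)
    (hinv : ∀ lam : ℝ, 0 < lam →
      (fun v : Fin 3 → ℝ => ![lam * v 0, v 1, v 2]) '' K = K) :
    ConeIso K {v | ∀ i, 0 ≤ v i} ∧
    ∃ u₁ u₂ u₃ : Fin 3 → ℝ, LinearIndependent ℝ ![u₁, u₂, u₃] ∧
      K = {x | ∃ a b c : ℝ, 0 ≤ a ∧ 0 ≤ b ∧ 0 ≤ c ∧ x = a • u₁ + b • u₂ + c • u₃} := by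
  obtain ⟨u₁, u₂, u₃, hK_eq⟩ := IsInvariantUnderFirstScaling.exists_three_generators hinv hK
  have hind : LinearIndependent ℝ ![u₁, u₂, u₃] := by
    refine linearIndependent_of_nonempty_interior_subset_span hK.2.2.2.1 ?_ (by simp)
    rw [hK_eq]
    rintro _ ⟨a, b, c, -, -, -, rfl⟩
    exact Submodule.mem_span_range_iff_exists_fun ℝ |>.2 ⟨![a, b, c], by simp [Fin.sum_univ_three]⟩
  exact ⟨hK_eq ▸ coneIso_nonneg_of_linearIndependent hind, u₁, u₂, u₃, hind, hK_eq⟩
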